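/- Consider the channel P(Y=y | X=x) = C(m,y)·(xθ/m)^y·(1−xθ/m)^{m−y} for x ∈ {0,...,m}, θ ∈ (0,1). Any capacity-achieving input distribution P satisfies P(m) > 0. -/

import Mathlib

/-!
Suppose `P m = 0` and let `k < m` be the largest input used by `P`. If `k = 0`, `P` is a point
mass and carries no information, while `(δ₀ + δₘ) / 2` does. Otherwise the output law `PW` is
positive, and the Kuhn–Tucker conditions for the maximizer `P` give
`D(Wₘ ‖ PW) ≤ I(P) ≤ D(Wₖ ‖ PW)`. But `PW` is a mixture of binomials with parameters at most
`p = kθ/m`, so `log (Wₖ / PW)` is nondecreasing on `{0, …, m}`; as `Wₘ = Bin(m, θ)`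
stochastically dominates `Wₖ = Bin(m, p)`, this gives
`D(Wₘ ‖ PW) ≥ D(Wₘ ‖ Wₖ) + D(Wₖ ‖ PW) > D(Wₖ ‖ PW)`.
-/

open Real Finset

/-- The binomial particle-intensity channel law:
`P(Y = y | X = x) = C(m,y) (xθ/m)^y (1 − xθ/m)^{m−y}`. -/
noncomputable def picChannel (m : ℕ) (θ : ℝ) (x y : ℕ) : ℝ :=
  (m.choose y : ℝ) * ((x : ℝ) * θ / m) ^ y * (1 - (x : ℝ) * θ / m) ^ (m - y)

/-- The output marginal of the channel under input distribution `P`. -/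
noncomputable def picOut (m : ℕ) (θ : ℝ) (P : ℕ → ℝ) (y : ℕ) : ℝ :=
  ∑ x ∈ range (m + 1), P x * picChannel m θ x y

/-- The mutual information `I(X;Y)` (in bits) of the channel `picChannel m θ`
under input distribution `P` on `{0,…,m}`, with the convention `0 log 0 = 0`
(satisfied by `Real.logb`). -/
noncomputable def picMutInfo (m : ℕ) (θ : ℝ) (P : ℕ → ℝ) : ℝ :=
  ∑ x ∈ range (m + 1), ∑ y ∈ range (m + 1),
    P x * picChannel m θ x y *
      Real.logb 2 (picChannel m θ x y / picOut m θ P y)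

/-- `P` is a probability mass function on `{0,…,m}`. -/
def IsPMFOn (m : ℕ) (P : ℕ → ℝ) : Prop :=
  (∀ x, 0 ≤ P x) ∧ ∑ x ∈ range (m + 1), P x = 1 ∧ ∀ x, m < x → P x = 0

lemma monotoneOn_nat_Iic_of_le_succ {α : Type*} [Preorder α] {n : ℕ} {f : ℕ → α}
    (hf : ∀ k < n, f k ≤ f (k + 1)) : MonotoneOn f (Set.Iic n) := by
  have hmono : Monotone fun k => f (min k n) := monotone_nat_of_le_succ fun k => by
    rcases lt_or_ge k n with hk | hk
    · simpa [min_eq_left hk.le, min_eq_left (Nat.succ_le_of_lt hk)] using hf k hk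
    · simp [min_eq_right hk, min_eq_right (hk.trans k.le_succ)]
  intro a ha b hb hab
  simpa [min_eq_left (Set.mem_Iic.mp ha), min_eq_left (Set.mem_Iic.mp hb)] using hmono hab

noncomputable def binomPMF (n : ℕ) (q : ℝ) (y : ℕ) : ℝ :=
  n.choose y * q ^ y * (1 - q) ^ (n - y)

section Binomial

variable {n : ℕ} {p q : ℝ}

lemma sum_binomPMF (n : ℕ) (q : ℝ) : ∑ y ∈ range (n + 1), binomPMF n q y = 1 := by
  have h := (add_pow q (1 - q) n).symm
  rw [add_sub_cancel, one_pow] at h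
  rw [← h]
  exact sum_congr rfl fun y _ => by unfold binomPMF; ring

lemma binomPMF_nonneg (hq0 : 0 ≤ q) (hq1 : q ≤ 1) (y : ℕ) : 0 ≤ binomPMF n q y := by
  have : 0 ≤ 1 - q := by linarith
  unfold binomPMF; positivity

lemma binomPMF_pos (hq0 : 0 < q) (hq1 : q < 1) {y : ℕ} (hy : y ≤ n) : 0 < binomPMF n q y := by
  have : 0 < 1 - q := by linarith
  have : (0 : ℝ) < n.choose y := by exact_mod_cast Nat.choose_pos hy
  unfold binomPMF; positivity

/-- Monotone likelihood ratio: `binomPMF n q (y + 1) / binomPMF n q y` increases with `q`. -/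
lemma binomPMF_succ_mul_le (hq0 : 0 ≤ q) (hqp : q ≤ p) (hp1 : p ≤ 1) {y : ℕ} (hy : y < n) :
    binomPMF n q (y + 1) * binomPMF n p y ≤ binomPMF n q y * binomPMF n p (y + 1) := by
  have hsub : n - y = n - (y + 1) + 1 := by omega
  have h1q : 0 ≤ 1 - q := by linarith
  have h1p : 0 ≤ 1 - p := by linarith
  have hcommon : 0 ≤ (n.choose y * n.choose (y + 1) : ℝ) * q ^ y * p ^ y
      * (1 - q) ^ (n - (y + 1)) * (1 - p) ^ (n - (y + 1)) := by
    have := hq0.trans hqp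
    positivity
  have hcross : q * (1 - p) ≤ (1 - q) * p := by nlinarith
  unfold binomPMF
  rw [hsub]
  calc _ = (n.choose y * n.choose (y + 1) : ℝ) * q ^ y * p ^ y
          * (1 - q) ^ (n - (y + 1)) * (1 - p) ^ (n - (y + 1)) * (q * (1 - p)) := by ring
    _ ≤ (n.choose y * n.choose (y + 1) : ℝ) * q ^ y * p ^ y
          * (1 - q) ^ (n - (y + 1)) * (1 - p) ^ (n - (y + 1)) * ((1 - q) * p) :=
        mul_le_mul_of_nonneg_left hcross hcommon
    _ = _ := by ring

/-- Thinning: `Bin(n, p + (1 - p) r)` is `Y + Z` with `Y ~ Bin(n, p)` and `Z ~ Bin(n - Y, r)`. -/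
lemma binomPMF_thinning (p r : ℝ) {w : ℕ} (hw : w ≤ n) :
    binomPMF n (p + (1 - p) * r) w
      = ∑ y ∈ range (w + 1), binomPMF n p y * binomPMF (n - y) r (w - y) := by
  have hterm : ∀ y ∈ range (w + 1), binomPMF n p y * binomPMF (n - y) r (w - y)
      = n.choose w * (p ^ y * ((1 - p) * r) ^ (w - y) * w.choose y)
          * ((1 - p) * (1 - r)) ^ (n - w) := by
    intro y hy
    have hyw : y ≤ w := Nat.lt_succ_iff.mp (mem_range.mp hy)
    have hchoose : (n.choose y : ℝ) * (n - y).choose (w - y) = n.choose w * w.choose y := by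
      exact_mod_cast (Nat.choose_mul hyw).symm
    have hpow : (1 - p) ^ (n - y) = (1 - p) ^ (w - y) * (1 - p) ^ (n - w) := by
      rw [← pow_add]; congr 1; omega
    unfold binomPMF
    rw [show n - y - (w - y) = n - w by omega, hpow, mul_pow, mul_pow]
    linear_combination (p ^ y * (1 - p) ^ (w - y) * (1 - p) ^ (n - w) * r ^ (w - y)
      * (1 - r) ^ (n - w)) * hchoose
  rw [sum_congr rfl hterm, ← sum_mul, ← mul_sum, ← add_pow, binomPMF,
    show 1 - (p + (1 - p) * r) = (1 - p) * (1 - r) by ring]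

lemma sum_binomPMF_mul_le_of_monotoneOn {φ : ℕ → ℝ} (hφ : MonotoneOn φ (Set.Iic n))
    (hp0 : 0 ≤ p) (hpq : p ≤ q) (hq1 : q ≤ 1) :
    ∑ y ∈ range (n + 1), binomPMF n p y * φ y ≤ ∑ y ∈ range (n + 1), binomPMF n q y * φ y := by
  rcases (hpq.trans hq1).eq_or_lt with rfl | hp1
  · rw [le_antisymm hq1 hpq]
  set r := (q - p) / (1 - p)
  have hr0 : 0 ≤ r := div_nonneg (by linarith) (by linarith)
  have hr1 : r ≤ 1 := (div_le_one (by linarith)).mpr (by linarith)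
  have hq : q = p + (1 - p) * r := by rw [mul_div_cancel₀ _ (by linarith)]; ring
  have hinner : ∀ y ∈ range (n + 1), binomPMF n p y * φ y
      ≤ ∑ z ∈ range (n - y + 1), binomPMF n p y * binomPMF (n - y) r z * φ (y + z) := by
    intro y hy
    have hyn : y ≤ n := Nat.lt_succ_iff.mp (mem_range.mp hy)
    calc binomPMF n p y * φ y
        = ∑ z ∈ range (n - y + 1), binomPMF n p y * binomPMF (n - y) r z * φ y := by
          rw [← sum_mul, ← mul_sum, sum_binomPMF, mul_one]
      _ ≤ _ := sum_le_sum fun z hz => mul_le_mul_of_nonneg_left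
          (hφ (Set.mem_Iic.mpr hyn) (Set.mem_Iic.mpr (by simp at hz; omega)) (by omega))
          (mul_nonneg (binomPMF_nonneg hp0 hp1.le y) (binomPMF_nonneg hr0 hr1 z))
  calc _ ≤ ∑ y ∈ range (n + 1), ∑ z ∈ range (n - y + 1),
        binomPMF n p y * binomPMF (n - y) r z * φ (y + z) := sum_le_sum hinner
    _ = ∑ y ∈ range (n + 1), ∑ w ∈ Ico y (n + 1),
        binomPMF n p y * binomPMF (n - y) r (w - y) * φ w := by
      refine sum_congr rfl fun y hy => ?_
      rw [sum_Ico_eq_sum_range, show n + 1 - y = n - y + 1 by simp at hy; omega]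
      simp only [Nat.add_sub_cancel_left]
    _ = ∑ w ∈ range (n + 1), binomPMF n q w * φ w := by
      rw [range_eq_Ico, sum_Ico_Ico_comm]
      refine sum_congr rfl fun w hw => ?_
      rw [hq, binomPMF_thinning p r (by simp at hw; omega), sum_mul, range_eq_Ico]

end Binomial

lemma InformationTheory.klFun_le_sq {x : ℝ} (hx : 0 ≤ x) :
    InformationTheory.klFun x ≤ (x - 1) ^ 2 := by
  have hxlog : x * log x ≤ x * (x - 1) := by
    rcases hx.eq_or_lt with rfl | hx
    · simp
    · exact mul_le_mul_of_nonneg_left (log_le_sub_one_of_pos hx) hx.le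
  rw [InformationTheory.klFun_apply]
  nlinarith

section RelEntropy

open InformationTheory

variable {β : Type*} {t : Finset β} {f g h : β → ℝ}

/-- Relative entropy in nats. Junk values make a term vanish when `f y = 0` and also when
`g y = 0`, so the lemmas below assume `g > 0`. -/
noncomputable def relEntropy (t : Finset β) (f g : β → ℝ) : ℝ :=
  ∑ y ∈ t, f y * log (f y / g y)

lemma relEntropy_self (t : Finset β) (f : β → ℝ) : relEntropy t f f = 0 :=
  sum_eq_zero fun y _ => by
    rcases eq_or_ne (f y) 0 with h | h <;> simp [h]

lemma relEntropy_eq_sum_klFun (hg : ∀ y ∈ t, 0 < g y) :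
    relEntropy t f g = ∑ y ∈ t, g y * klFun (f y / g y) + (∑ y ∈ t, f y - ∑ y ∈ t, g y) := by
  rw [relEntropy, ← sum_sub_distrib, ← sum_add_distrib]
  refine sum_congr rfl fun y hy => ?_
  have := (hg y hy).ne'
  rw [klFun_apply]
  field_simp
  ring

lemma relEntropy_nonneg (hf : ∀ y ∈ t, 0 ≤ f y) (hg : ∀ y ∈ t, 0 < g y)
    (hfg : ∑ y ∈ t, f y = ∑ y ∈ t, g y) : 0 ≤ relEntropy t f g := by
  rw [relEntropy_eq_sum_klFun hg, hfg, sub_self, add_zero]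
  exact sum_nonneg fun y hy =>
    mul_nonneg (hg y hy).le (klFun_nonneg (div_nonneg (hf y hy) (hg y hy).le))

lemma relEntropy_pos (hf : ∀ y ∈ t, 0 ≤ f y) (hg : ∀ y ∈ t, 0 < g y)
    (hfg : ∑ y ∈ t, f y = ∑ y ∈ t, g y) (hne : ∃ y ∈ t, f y ≠ g y) : 0 < relEntropy t f g := by
  rw [relEntropy_eq_sum_klFun hg, hfg, sub_self, add_zero]
  have hkl : ∀ y ∈ t, 0 ≤ klFun (f y / g y) := fun y hy =>
    klFun_nonneg (div_nonneg (hf y hy) (hg y hy).le)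
  obtain ⟨y, hy, hfy⟩ := hne
  refine sum_pos' (fun y hy => mul_nonneg (hg y hy).le (hkl y hy)) ⟨y, hy, ?_⟩
  refine mul_pos (hg y hy) ((hkl y hy).lt_of_ne' fun h0 => hfy ?_)
  rw [klFun_eq_zero_iff (div_nonneg (hf y hy) (hg y hy).le), div_eq_one_iff_eq (hg y hy).ne'] at h0
  exact h0

lemma relEntropy_le_sum_sq_div (hf : ∀ y ∈ t, 0 ≤ f y) (hg : ∀ y ∈ t, 0 < g y)
    (hfg : ∑ y ∈ t, f y = ∑ y ∈ t, g y) :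
    relEntropy t f g ≤ ∑ y ∈ t, (f y - g y) ^ 2 / g y := by
  rw [relEntropy_eq_sum_klFun hg, hfg, sub_self, add_zero]
  refine sum_le_sum fun y hy => ?_
  have hgy := hg y hy
  calc g y * klFun (f y / g y) ≤ g y * (f y / g y - 1) ^ 2 :=
        mul_le_mul_of_nonneg_left (klFun_le_sq (div_nonneg (hf y hy) hgy.le)) hgy.le
    _ = (f y - g y) ^ 2 / g y := by field_simp

lemma relEntropy_eq_add (hh : ∀ y ∈ t, h y ≠ 0) (hg : ∀ y ∈ t, g y ≠ 0) :
    relEntropy t f g = relEntropy t f h + ∑ y ∈ t, f y * log (h y / g y) := by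
  rw [relEntropy, relEntropy, ← sum_add_distrib]
  refine sum_congr rfl fun y hy => ?_
  rcases eq_or_ne (f y) 0 with hf | hf
  · simp [hf]
  rw [← mul_add, ← log_mul (div_ne_zero hf (hh y hy)) (div_ne_zero (hh y hy) (hg y hy)),
    div_mul_div_cancel₀ (hh y hy)]

end RelEntropy

section Channel

variable {β : Type*} {n : ℕ} {t : Finset β} {W : ℕ → β → ℝ} {P Q : ℕ → ℝ}

noncomputable def channelOutput (n : ℕ) (W : ℕ → β → ℝ) (P : ℕ → ℝ) (y : β) : ℝ :=
  ∑ x ∈ range (n + 1), P x * W x y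

noncomputable def mutualInfo (n : ℕ) (t : Finset β) (W : ℕ → β → ℝ) (P : ℕ → ℝ) : ℝ :=
  ∑ x ∈ range (n + 1), P x * relEntropy t (W x) (channelOutput n W P)

def mixAt (P : ℕ → ℝ) (a : ℕ) (s : ℝ) (x : ℕ) : ℝ :=
  (1 - s) * P x + s * if x = a then 1 else 0

lemma sum_mixAt_mul {a : ℕ} (ha : a ≤ n) (s : ℝ) (v : ℕ → ℝ) :
    ∑ x ∈ range (n + 1), mixAt P a s x * v x
      = (1 - s) * ∑ x ∈ range (n + 1), P x * v x + s * v a := by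
  simp only [mixAt, add_mul, sum_add_distrib, mul_assoc, ← mul_sum, ite_mul, one_mul, zero_mul,
    sum_ite_eq', mem_range, Nat.lt_succ_of_le ha, if_true]

lemma isPMFOn_mixAt (hP : IsPMFOn n P) {a : ℕ} (ha : a ≤ n) {s : ℝ} (hs0 : 0 ≤ s) (hs1 : s ≤ 1) :
    IsPMFOn n (mixAt P a s) := by
  refine ⟨fun x => ?_, ?_, fun x hx => ?_⟩
  · have := hP.1 x
    unfold mixAt; split_ifs <;> nlinarith
  · simpa [hP.2.1] using sum_mixAt_mul (P := P) ha s fun _ => 1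
  · simp [mixAt, hP.2.2 x hx, (ha.trans_lt hx).ne']

lemma channelOutput_mixAt {a : ℕ} (ha : a ≤ n) (s : ℝ) (y : β) :
    channelOutput n W (mixAt P a s) y = (1 - s) * channelOutput n W P y + s * W a y :=
  sum_mixAt_mul ha s fun x => W x y

lemma channelOutput_of_support_subset {a : ℕ} (ha : a ≤ n) (hP : IsPMFOn n P)
    (hsupp : ∀ x, x ≠ a → P x = 0) : channelOutput n W P = W a := by
  have hPa : P a = 1 := by
    rw [← hP.2.1, sum_eq_single_of_mem a (mem_range.mpr (Nat.lt_succ_of_le ha))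
      fun x _ hx => hsupp x hx]
  ext y
  rw [channelOutput, sum_eq_single_of_mem a (mem_range.mpr (Nat.lt_succ_of_le ha))
    fun x _ hx => by rw [hsupp x hx, zero_mul], hPa, one_mul]

lemma mutualInfo_of_support_subset {a : ℕ} (ha : a ≤ n) (hP : IsPMFOn n P)
    (hsupp : ∀ x, x ≠ a → P x = 0) : mutualInfo n t W P = 0 := by
  refine sum_eq_zero fun x _ => ?_
  rcases eq_or_ne x a with rfl | hx
  · rw [channelOutput_of_support_subset ha hP hsupp, relEntropy_self, mul_zero]
  · rw [hsupp x hx, zero_mul]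

lemma sum_channelOutput (hW1 : ∀ x ≤ n, ∑ y ∈ t, W x y = 1) (hP : IsPMFOn n P) :
    ∑ y ∈ t, channelOutput n W P y = 1 := by
  simp only [channelOutput]
  rw [sum_comm, ← hP.2.1]
  exact sum_congr rfl fun x hx => by
    rw [← mul_sum, hW1 x (Nat.lt_succ_iff.mp (mem_range.mp hx)), mul_one]

lemma mutualInfo_eq_sub {r : β → ℝ} (hr : ∀ y ∈ t, r y ≠ 0)
    (hout : ∀ y ∈ t, channelOutput n W Q y ≠ 0) :
    mutualInfo n t W Q = ∑ x ∈ range (n + 1), Q x * relEntropy t (W x) r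
      - relEntropy t (channelOutput n W Q) r := by
  have hcross : ∑ x ∈ range (n + 1), Q x * ∑ y ∈ t, W x y * log (r y / channelOutput n W Q y)
      = -relEntropy t (channelOutput n W Q) r := by
    simp only [mul_sum, relEntropy, ← sum_neg_distrib]
    rw [sum_comm]
    refine sum_congr rfl fun y _ => ?_
    rw [channelOutput, sum_mul, ← sum_neg_distrib]
    refine sum_congr rfl fun x _ => ?_
    rw [← inv_div, log_inv]
    ring
  rw [mutualInfo, sub_eq_add_neg, ← hcross, ← sum_add_distrib]
  exact sum_congr rfl fun x _ => by rw [relEntropy_eq_add hr hout, mul_add]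

lemma mutualInfo_pos (hW0 : ∀ x ≤ n, ∀ y ∈ t, 0 ≤ W x y) (hW1 : ∀ x ≤ n, ∑ y ∈ t, W x y = 1)
    (hQ : IsPMFOn n Q) (hout : ∀ y ∈ t, 0 < channelOutput n W Q y) {a : ℕ} (ha : a ≤ n)
    (hQa : 0 < Q a) (hne : ∃ y ∈ t, W a y ≠ channelOutput n W Q y) : 0 < mutualInfo n t W Q := by
  have hsum : ∀ x ≤ n, ∑ y ∈ t, W x y = ∑ y ∈ t, channelOutput n W Q y := fun x hx => by
    rw [hW1 x hx, sum_channelOutput hW1 hQ]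
  refine sum_pos' (fun x hx => ?_) ⟨a, mem_range.mpr (Nat.lt_succ_of_le ha), ?_⟩
  · have hx := Nat.lt_succ_iff.mp (mem_range.mp hx)
    exact mul_nonneg (hQ.1 x) (relEntropy_nonneg (hW0 x hx) hout (hsum x hx))
  · exact mul_pos hQa (relEntropy_pos (hW0 a ha) hout (hsum a ha) hne)

section Maximizer

open Filter Topology

variable (hW0 : ∀ x ≤ n, ∀ y ∈ t, 0 ≤ W x y) (hW1 : ∀ x ≤ n, ∑ y ∈ t, W x y = 1)
  (hP : IsPMFOn n P) (hmax : ∀ Q, IsPMFOn n Q → mutualInfo n t W Q ≤ mutualInfo n t W P)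
  (hout : ∀ y ∈ t, 0 < channelOutput n W P y)
include hW0 hW1 hP hmax hout

/-- Kuhn–Tucker condition. Moving mass `s` to `a` changes `I` by `s (D(Wₐ ‖ PW) - I(P))` up to a
`χ²` term of order `s²`. -/
lemma relEntropy_le_mutualInfo_of_isMax {a : ℕ} (ha : a ≤ n) :
    relEntropy t (W a) (channelOutput n W P) ≤ mutualInfo n t W P := by
  set o := channelOutput n W P
  set χ := ∑ y ∈ t, (W a y - o y) ^ 2 / o y
  have hgap : ∀ s ∈ Set.Ioo (0 : ℝ) 1, relEntropy t (W a) o - mutualInfo n t W P ≤ s * χ := by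
    rintro s ⟨hs0, hs1⟩
    set Q := mixAt P a s
    have hoQ : ∀ y ∈ t, 0 < channelOutput n W Q y := fun y hy => by
      rw [channelOutput_mixAt ha]
      nlinarith [hout y hy, hW0 a ha y hy]
    have hsplit : mutualInfo n t W Q
        = (1 - s) * mutualInfo n t W P + s * relEntropy t (W a) o
          - relEntropy t (channelOutput n W Q) o := by
      rw [mutualInfo_eq_sub (fun y hy => (hout y hy).ne') (fun y hy => (hoQ y hy).ne'),
        sum_mixAt_mul ha]
      rfl
    have hχ : relEntropy t (channelOutput n W Q) o ≤ s ^ 2 * χ := by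
      refine (relEntropy_le_sum_sq_div (fun y hy => (hoQ y hy).le) hout ?_).trans_eq ?_
      · rw [sum_channelOutput hW1 (isPMFOn_mixAt hP ha hs0.le hs1.le), sum_channelOutput hW1 hP]
      · rw [mul_sum]
        exact sum_congr rfl fun y _ => by rw [channelOutput_mixAt ha]; ring
    have hle := hmax Q (isPMFOn_mixAt hP ha hs0.le hs1.le)
    have : s * (relEntropy t (W a) o - mutualInfo n t W P) ≤ s * (s * χ) := by nlinarith
    exact le_of_mul_le_mul_left this hs0
  have hlim : Tendsto (fun s => s * χ) (𝓝[>] 0) (𝓝 0) :=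
    tendsto_nhdsWithin_of_tendsto_nhds (by simpa using (continuous_mul_const χ).tendsto 0)
  have := ge_of_tendsto hlim (eventually_of_mem (Ioo_mem_nhdsGT zero_lt_one) hgap)
  linarith

lemma mutualInfo_le_relEntropy_of_isMax {k : ℕ} (hk : k ≤ n) (hPk : 0 < P k) :
    mutualInfo n t W P ≤ relEntropy t (W k) (channelOutput n W P) := by
  by_contra! hlt
  have hkmem : k ∈ range (n + 1) := mem_range.mpr (Nat.lt_succ_of_le hk)
  refine (lt_irrefl (mutualInfo n t W P)) ?_
  calc mutualInfo n t W P
      < ∑ x ∈ range (n + 1), P x * mutualInfo n t W P :=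
        sum_lt_sum (fun x hx => mul_le_mul_of_nonneg_left
            (relEntropy_le_mutualInfo_of_isMax hW0 hW1 hP hmax hout
              (Nat.lt_succ_iff.mp (mem_range.mp hx))) (hP.1 x))
          ⟨k, hkmem, mul_lt_mul_of_pos_left hlt hPk⟩
    _ = mutualInfo n t W P := by rw [← sum_mul, hP.2.1, one_mul]

end Maximizer

end Channel

lemma IsPMFOn.exists_max_support {n : ℕ} {P : ℕ → ℝ} (hP : IsPMFOn n P) :
    ∃ k ≤ n, 0 < P k ∧ ∀ x, P x ≠ 0 → x ≤ k := by
  set S := (range (n + 1)).filter (P · ≠ 0)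
  obtain ⟨x₀, hx₀, hPx₀⟩ := exists_ne_zero_of_sum_ne_zero (hP.2.1.trans_ne one_ne_zero)
  have hS : S.Nonempty := ⟨x₀, mem_filter.mpr ⟨hx₀, hPx₀⟩⟩
  obtain ⟨hkn, hPk⟩ := mem_filter.mp (S.max'_mem hS)
  refine ⟨S.max' hS, Nat.lt_succ_iff.mp (mem_range.mp hkn), (hP.1 _).lt_of_ne' hPk,
    fun x hx => S.le_max' x (mem_filter.mpr ⟨mem_range.mpr ?_, hx⟩)⟩
  by_contra! hnx
  exact hx (hP.2.2 x (Nat.succ_le_iff.mp hnx))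

section PicChannel

variable {m k : ℕ} {θ : ℝ} {P : ℕ → ℝ}

lemma picChannel_eq_binomPMF (m : ℕ) (θ : ℝ) (x : ℕ) :
    picChannel m θ x = binomPMF m (x * θ / m) := rfl

lemma picMutInfo_mul_log_two (m : ℕ) (θ : ℝ) (P : ℕ → ℝ) :
    picMutInfo m θ P * log 2 = mutualInfo m (range (m + 1)) (picChannel m θ) P := by
  have hlog2 : log 2 ≠ 0 := (log_pos one_lt_two).ne'
  simp only [picMutInfo, mutualInfo, relEntropy, sum_mul, mul_sum, logb]
  refine sum_congr rfl fun x _ => sum_congr rfl fun y _ => ?_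
  field_simp
  rfl

lemma natCast_mul_div_le {x : ℕ} (hθ : 0 ≤ θ) (hx : x ≤ m) : (x : ℝ) * θ / m ≤ θ := by
  rcases Nat.eq_zero_or_pos m with rfl | hm
  · simpa using hθ
  rw [div_le_iff₀ (Nat.cast_pos.mpr hm), mul_comm]
  exact mul_le_mul_of_nonneg_left (Nat.cast_le.mpr hx) hθ

lemma sum_picChannel (m : ℕ) (θ : ℝ) (x : ℕ) :
    ∑ y ∈ range (m + 1), picChannel m θ x y = 1 :=
  sum_binomPMF m _

lemma picChannel_nonneg (hθ0 : 0 ≤ θ) (hθ1 : θ ≤ 1) {x : ℕ} (hx : x ≤ m) (y : ℕ) :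
    0 ≤ picChannel m θ x y :=
  binomPMF_nonneg (by positivity) ((natCast_mul_div_le hθ0 hx).trans hθ1) y

lemma picChannel_pos (hθ0 : 0 < θ) (hθ1 : θ < 1) {x y : ℕ} (hx0 : 0 < x) (hx : x ≤ m)
    (hy : y ≤ m) : 0 < picChannel m θ x y :=
  binomPMF_pos (by have := hx0.trans_le hx; positivity)
    ((natCast_mul_div_le hθ0.le hx).trans_lt hθ1) hy

lemma picOut_pos (hθ0 : 0 < θ) (hθ1 : θ < 1) (hP0 : ∀ x, 0 ≤ P x) (hk0 : 0 < k) (hkm : k ≤ m)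
    (hPk : 0 < P k) {y : ℕ} (hy : y ≤ m) : 0 < picOut m θ P y :=
  sum_pos' (fun x hx => mul_nonneg (hP0 x)
      (picChannel_nonneg hθ0.le hθ1.le (Nat.lt_succ_iff.mp (mem_range.mp hx)) y))
    ⟨k, mem_range.mpr (Nat.lt_succ_of_le hkm), mul_pos hPk (picChannel_pos hθ0 hθ1 hk0 hkm hy)⟩

lemma picOut_succ_mul_le (hθ0 : 0 ≤ θ) (hθ1 : θ ≤ 1) (hP0 : ∀ x, 0 ≤ P x)
    (hsupp : ∀ x, P x ≠ 0 → x ≤ k) (hkm : k ≤ m) {y : ℕ} (hy : y < m) :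
    picOut m θ P (y + 1) * picChannel m θ k y ≤ picOut m θ P y * picChannel m θ k (y + 1) := by
  simp only [picOut, sum_mul, mul_assoc]
  refine sum_le_sum fun x _ => ?_
  rcases eq_or_ne (P x) 0 with hPx | hPx
  · simp [hPx]
  refine mul_le_mul_of_nonneg_left (binomPMF_succ_mul_le (by positivity) ?_
    ((natCast_mul_div_le hθ0 hkm).trans hθ1) hy) (hP0 x)
  gcongr
  exact hsupp x hPx

lemma relEntropy_picChannel_lt (hθ0 : 0 < θ) (hθ1 : θ < 1) (hP0 : ∀ x, 0 ≤ P x)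
    (hsupp : ∀ x, P x ≠ 0 → x ≤ k) (hk0 : 0 < k) (hkm : k < m) (hPk : 0 < P k) :
    relEntropy (range (m + 1)) (picChannel m θ k) (picOut m θ P)
      < relEntropy (range (m + 1)) (picChannel m θ m) (picOut m θ P) := by
  set o := picOut m θ P
  have hm : (0 : ℝ) < m := Nat.cast_pos.mpr (hk0.trans hkm)
  set p : ℝ := k * θ / m
  have hp0 : 0 < p := by have : (0 : ℝ) < k := Nat.cast_pos.mpr hk0; positivity
  have hpθ : p < θ := by
    rw [div_lt_iff₀ hm, mul_comm]
    exact mul_lt_mul_of_pos_left (Nat.cast_lt.mpr hkm) hθ0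
  have hWm : picChannel m θ m = binomPMF m θ := by
    rw [picChannel_eq_binomPMF, mul_div_cancel_left₀ _ hm.ne']
  have hWk_pos : ∀ y ∈ range (m + 1), 0 < picChannel m θ k y := fun y hy =>
    picChannel_pos hθ0 hθ1 hk0 hkm.le (Nat.lt_succ_iff.mp (mem_range.mp hy))
  have hout : ∀ y ∈ range (m + 1), 0 < o y := fun y hy =>
    picOut_pos hθ0 hθ1 hP0 hk0 hkm.le hPk (Nat.lt_succ_iff.mp (mem_range.mp hy))
  set φ : ℕ → ℝ := fun y => log (picChannel m θ k y / o y)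
  have hφ : MonotoneOn φ (Set.Iic m) := monotoneOn_nat_Iic_of_le_succ fun y hy => by
    have hmem : ∀ z ≤ m, z ∈ range (m + 1) := fun z hz => mem_range.mpr (Nat.lt_succ_of_le hz)
    refine log_le_log (div_pos (hWk_pos y (hmem y hy.le)) (hout y (hmem y hy.le))) ?_
    rw [div_le_div_iff₀ (hout y (hmem y hy.le)) (hout (y + 1) (hmem (y + 1) hy))]
    linarith [picOut_succ_mul_le hθ0.le hθ1.le hP0 hsupp hkm.le hy]
  have hdom : ∑ y ∈ range (m + 1), picChannel m θ k y * φ y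
      ≤ ∑ y ∈ range (m + 1), picChannel m θ m y * φ y := by
    rw [hWm]
    exact sum_binomPMF_mul_le_of_monotoneOn hφ hp0.le hpθ.le hθ1.le
  have hgap : 0 < relEntropy (range (m + 1)) (picChannel m θ m) (picChannel m θ k) := by
    refine relEntropy_pos (fun y _ => picChannel_nonneg hθ0.le hθ1.le le_rfl y) hWk_pos
      (by rw [sum_picChannel, sum_picChannel]) ⟨0, mem_range.mpr m.succ_pos, ?_⟩
    rw [hWm, picChannel_eq_binomPMF]
    simpa [binomPMF] using (pow_lt_pow_left₀ (by linarith : 1 - θ < 1 - p) (by linarith)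
      (hk0.trans hkm).ne').ne
  calc relEntropy (range (m + 1)) (picChannel m θ k) o
      = ∑ y ∈ range (m + 1), picChannel m θ k y * φ y := rfl
    _ < relEntropy (range (m + 1)) (picChannel m θ m) (picChannel m θ k)
        + ∑ y ∈ range (m + 1), picChannel m θ m y * φ y := by linarith
    _ = relEntropy (range (m + 1)) (picChannel m θ m) o :=
      (relEntropy_eq_add (fun y hy => (hWk_pos y hy).ne') (fun y hy => (hout y hy).ne')).symm

lemma mutualInfo_picChannel_mixAt_pos (hm : 1 ≤ m) (hθ0 : 0 < θ) (hθ1 : θ < 1)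
    (hP : IsPMFOn m P) (hsupp : ∀ x, x ≠ 0 → P x = 0) :
    0 < mutualInfo m (range (m + 1)) (picChannel m θ) (mixAt P m (1 / 2)) := by
  have hout : ∀ y, channelOutput m (picChannel m θ) (mixAt P m (1 / 2)) y
      = (picChannel m θ 0 y + picChannel m θ m y) / 2 := fun y => by
    rw [channelOutput_mixAt le_rfl, channelOutput_of_support_subset m.zero_le hP hsupp]
    ring
  refine mutualInfo_pos (fun x hx y _ => picChannel_nonneg hθ0.le hθ1.le hx y)
    (fun x _ => sum_picChannel m θ x) (isPMFOn_mixAt hP le_rfl (by norm_num) (by norm_num))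
    (fun y hy => ?_) le_rfl ?_ ⟨0, mem_range.mpr m.succ_pos, ?_⟩
  · rw [hout]
    have := picChannel_pos hθ0 hθ1 hm le_rfl (Nat.lt_succ_iff.mp (mem_range.mp hy))
    have := picChannel_nonneg hθ0.le hθ1.le m.zero_le y
    positivity
  · have := hP.1 m
    simp only [mixAt, if_true]
    linarith
  · have hpow : (1 - θ) ^ m < 1 := pow_lt_one₀ (by linarith) (by linarith) (by omega)
    rw [hout]
    simp only [picChannel, Nat.choose_zero_right, pow_zero, Nat.sub_zero, Nat.cast_zero,
      zero_mul, zero_div, sub_zero, one_pow, mul_one, one_mul, Nat.cast_one]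
    rw [mul_div_cancel_left₀ _ (Nat.cast_pos.mpr hm).ne']
    linarith

end PicChannel

/-- Any capacity-achieving input distribution for the binomial
particle-intensity channel puts positive mass on the maximal symbol `m`. -/
theorem pic_optimal_input_pos_at_max
    (m : ℕ) (hm : 1 ≤ m) (θ : ℝ) (hθ : θ ∈ Set.Ioo (0 : ℝ) 1)
    (P : ℕ → ℝ) (hP : IsPMFOn m P)
    (hopt : ∀ Q : ℕ → ℝ, IsPMFOn m Q → picMutInfo m θ Q ≤ picMutInfo m θ P) :
    0 < P m := by
  obtain ⟨hθ0, hθ1⟩ := hθ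
  have hW0 : ∀ x ≤ m, ∀ y ∈ range (m + 1), 0 ≤ picChannel m θ x y :=
    fun x hx y _ => picChannel_nonneg hθ0.le hθ1.le hx y
  have hW1 : ∀ x ≤ m, ∑ y ∈ range (m + 1), picChannel m θ x y = 1 :=
    fun x _ => sum_picChannel m θ x
  have hmax : ∀ Q, IsPMFOn m Q → mutualInfo m (range (m + 1)) (picChannel m θ) Q
      ≤ mutualInfo m (range (m + 1)) (picChannel m θ) P := fun Q hQ => by
    simpa only [picMutInfo_mul_log_two] using
      mul_le_mul_of_nonneg_right (hopt Q hQ) (log_nonneg one_le_two)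
  refine (hP.1 m).lt_of_ne' fun hPm => ?_
  obtain ⟨k, hkm, hPk, hsupp⟩ := hP.exists_max_support
  have hkm : k < m := hkm.lt_of_ne (by rintro rfl; exact hPk.ne' hPm)
  rcases Nat.eq_zero_or_pos k with rfl | hk0
  · have hsupp0 : ∀ x, x ≠ 0 → P x = 0 := fun x hx => by
      by_contra h
      exact hx (Nat.le_zero.mp (hsupp x h))
    have hle := hmax _ (isPMFOn_mixAt hP le_rfl (by norm_num) (by norm_num : (1 / 2 : ℝ) ≤ 1))
    rw [mutualInfo_of_support_subset m.zero_le hP hsupp0] at hle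
    exact hle.not_gt (mutualInfo_picChannel_mixAt_pos hm hθ0 hθ1 hP hsupp0)
  · have hout : ∀ y ∈ range (m + 1), 0 < picOut m θ P y := fun y hy =>
      picOut_pos hθ0 hθ1 hP.1 hk0 hkm.le hPk (Nat.lt_succ_iff.mp (mem_range.mp hy))
    have hDm := relEntropy_le_mutualInfo_of_isMax hW0 hW1 hP hmax hout le_rfl
    have hDk := mutualInfo_le_relEntropy_of_isMax hW0 hW1 hP hmax hout hkm.le hPk
    exact (hDm.trans hDk).not_gt (relEntropy_picChannel_lt hθ0 hθ1 hP.1 hsupp hk0 hkm hPk)
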